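/- Let H be a Hopf algebra with nonzero left integral ∫. Define a product on H by g * h := h₁ ∫(h₂ S(g)). Then * is associative, making (H, *) a (possibly non-unital) associative k-algebra. -/

import Mathlib

open TensorProduct LinearMap

noncomputable section

variable (k : Type*) [Field k] (H : Type*) [Ring H] [HopfAlgebra k H]

/-- `∫` is a left integral on `H`: `a₁ ∫(a₂) = ∫(a) 1` for all `a`. -/
def IsLeftIntegral (I : H →ₗ[k] k) : Prop :=
  ∀ a : H, TensorProduct.rid k H (LinearMap.lTensor H I (Coalgebra.comul a)) = I a • (1 : H)

/-- `∫` is a right integral on `H`: `∫(a₁) a₂ = ∫(a) 1` for all `a`. -/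
def IsRightIntegral (I : H →ₗ[k] k) : Prop :=
  ∀ a : H, TensorProduct.lid k H (LinearMap.rTensor H I (Coalgebra.comul a)) = I a • (1 : H)

/-- The linear map `h ⊗ g ↦ ∫(h S(g))`. -/
def intPair (I : H →ₗ[k] k) : H ⊗[k] H →ₗ[k] k :=
  I ∘ₗ LinearMap.mul' k H ∘ₗ LinearMap.lTensor H (HopfAlgebra.antipode (R := k))

/-- The linear map `g ⊗ h ↦ h₁ ∫(h₂ S(g))` (the convolution product). -/
def convMap (I : H →ₗ[k] k) : H ⊗[k] H →ₗ[k] H :=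
  (TensorProduct.rid k H).toLinearMap
    ∘ₗ LinearMap.lTensor H (intPair k H I)
    ∘ₗ (TensorProduct.assoc k H H H).toLinearMap
    ∘ₗ (Coalgebra.comul (R := k)).rTensor H
    ∘ₗ (TensorProduct.comm k H H).toLinearMap

/-- The convolution product `g * h := h₁ ∫(h₂ S(g))`. -/
def convProd (I : H →ₗ[k] k) (g h : H) : H := convMap k H I (g ⊗ₜ h)

/-- The linear map `g ⊗ h ↦ ∫(h S(g₁)) g₂`. -/
def convMap' (I : H →ₗ[k] k) : H ⊗[k] H →ₗ[k] H :=
  (TensorProduct.lid k H).toLinearMap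
    ∘ₗ (intPair k H I).rTensor H
    ∘ₗ (TensorProduct.assoc k H H H).symm.toLinearMap
    ∘ₗ LinearMap.lTensor H (Coalgebra.comul (R := k))
    ∘ₗ (TensorProduct.comm k H H).toLinearMap

open Coalgebra HopfAlgebra

local notation "S'" => HopfAlgebra.antipode (R := k) (A := H)
local notation "Δ'" => Coalgebra.comul (R := k) (A := H)

lemma repr_counit_left {a : H} {ι : Type*} (r : Coalgebra.Repr k a ι) :
    ∑ i ∈ r.index, Coalgebra.counit (R := k) (r.left i) • r.right i = a := by
  have h := congrArg (TensorProduct.lid k H) (Coalgebra.sum_counit_tmul_eq r)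
  rw [map_sum] at h
  simpa only [TensorProduct.lid_tmul, one_smul] using h

lemma repr_counit_right {a : H} {ι : Type*} (r : Coalgebra.Repr k a ι) :
    ∑ i ∈ r.index, Coalgebra.counit (R := k) (r.right i) • r.left i = a := by
  have h := congrArg (TensorProduct.rid k H) (Coalgebra.sum_tmul_counit_eq r)
  rw [map_sum] at h
  simpa only [TensorProduct.rid_tmul, one_smul] using h

lemma repr_integral {I : H →ₗ[k] k} (hI : IsLeftIntegral k H I) {a : H}
    {ι : Type*} (r : Coalgebra.Repr k a ι) :
    ∑ i ∈ r.index, I (r.right i) • r.left i = I a • (1 : H) := by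
  have h := hI a
  rw [← r.eq] at h
  simpa [map_sum] using h

section Tri
variable {M : Type*} [AddCommMonoid M] [Module k M]

/-- A trilinear-map gadget. -/
def tri3 (φ : H → H → H → M)
    (ha1 : ∀ x x' y z, φ (x + x') y z = φ x y z + φ x' y z)
    (hs1 : ∀ (c : k) x y z, φ (c • x) y z = c • φ x y z)
    (ha2 : ∀ x y y' z, φ x (y + y') z = φ x y z + φ x y' z)
    (hs2 : ∀ (c : k) x y z, φ x (c • y) z = c • φ x y z)
    (ha3 : ∀ x y z z', φ x y (z + z') = φ x y z + φ x y z')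
    (hs3 : ∀ (c : k) x y z, φ x y (c • z) = c • φ x y z) :
    H ⊗[k] (H ⊗[k] H) →ₗ[k] M :=
  TensorProduct.lift
    { toFun := fun x => TensorProduct.lift
        (LinearMap.mk₂ k (φ x) (fun y y' z => ha2 x y y' z) (fun c y z => hs2 c x y z)
          (fun y z z' => ha3 x y z z') (fun c y z => hs3 c x y z))
      map_add' := fun x x' => by
        apply TensorProduct.ext'
        intro y z
        simp [ha1]
      map_smul' := fun c x => by
        apply TensorProduct.ext'
        intro y z
        simp [hs1] }

@[simp] lemma tri3_tmul (φ : H → H → H → M) (ha1 hs1 ha2 hs2 ha3 hs3) (x y z : H) :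
    tri3 k H φ ha1 hs1 ha2 hs2 ha3 hs3 (x ⊗ₜ (y ⊗ₜ z)) = φ x y z := by
  simp [tri3]

/-- The key coassociativity reshuffle for arbitrary trilinear expressions. -/
lemma sum_tri3 (φ : H → H → H → M)
    (ha1 : ∀ x x' y z, φ (x + x') y z = φ x y z + φ x' y z)
    (hs1 : ∀ (c : k) x y z, φ (c • x) y z = c • φ x y z)
    (ha2 : ∀ x y y' z, φ x (y + y') z = φ x y z + φ x y' z)
    (hs2 : ∀ (c : k) x y z, φ x (c • y) z = c • φ x y z)
    (ha3 : ∀ x y z z', φ x y (z + z') = φ x y z + φ x y z')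
    (hs3 : ∀ (c : k) x y z, φ x y (c • z) = c • φ x y z)
    {a : H} {ι κ Λ : Type*} (r : Coalgebra.Repr k a ι)
    (p : (i : ι) → Coalgebra.Repr k (r.left i) κ)
    (q : (i : ι) → Coalgebra.Repr k (r.right i) Λ) :
    ∑ i ∈ r.index, ∑ j ∈ (p i).index, φ ((p i).left j) ((p i).right j) (r.right i)
      = ∑ i ∈ r.index, ∑ j ∈ (q i).index, φ (r.left i) ((q i).left j) ((q i).right j) := by
  have h := congrArg (tri3 k H φ ha1 hs1 ha2 hs2 ha3 hs3) (Coalgebra.sum_tmul_tmul_eq r p q)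
  simpa using h

end Tri

/-- A representation of the comultiplication of a product. -/
def mulRepr {x y : H} {ι κ : Type*} (rx : Coalgebra.Repr k x ι) (ry : Coalgebra.Repr k y κ) :
    Coalgebra.Repr k (x * y) (ι × κ) where
  index := rx.index ×ˢ ry.index
  left := fun p => rx.left p.1 * ry.left p.2
  right := fun p => rx.right p.1 * ry.right p.2
  eq := by
    rw [Finset.sum_product, Bialgebra.comul_mul, ← rx.eq, ← ry.eq, Finset.sum_mul_sum]
    simp [Algebra.TensorProduct.tmul_mul_tmul]

section Conv

variable {C : Type*} [Semiring C] [Algebra k C]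

/-- convolution product of linear maps into an algebra -/
def conv (f g : H →ₗ[k] C) : H →ₗ[k] C :=
  LinearMap.mul' k C ∘ₗ TensorProduct.map f g ∘ₗ Coalgebra.comul

lemma conv_repr (f g : H →ₗ[k] C) {a : H} {ι : Type*} (r : Coalgebra.Repr k a ι) :
    conv k H f g a = ∑ i ∈ r.index, f (r.left i) * g (r.right i) := by
  simp only [conv, LinearMap.coe_comp, Function.comp_apply]
  rw [← r.eq]
  simp

/-- the unit of the convolution algebra -/
def convUnit : H →ₗ[k] C := Algebra.linearMap k C ∘ₗ Coalgebra.counit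

lemma convUnit_apply (a : H) :
    convUnit k H (C := C) a = algebraMap k C (Coalgebra.counit (R := k) a) := rfl

lemma conv_unit_left (f : H →ₗ[k] C) : conv k H (convUnit k H) f = f := by
  ext a
  rw [conv_repr k H _ f (ℛ k a)]
  simp only [convUnit_apply, ← Algebra.smul_def]
  simp only [← map_smul f]
  rw [← map_sum f, repr_counit_left]

lemma conv_unit_right (f : H →ₗ[k] C) : conv k H f (convUnit k H) = f := by
  ext a
  rw [conv_repr k H f _ (ℛ k a)]
  simp only [convUnit_apply, Algebra.algebraMap_eq_smul_one, mul_smul_comm, mul_one]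
  simp only [← map_smul f]
  rw [← map_sum f, repr_counit_right]

lemma conv_assoc (f g h : H →ₗ[k] C) :
    conv k H (conv k H f g) h = conv k H f (conv k H g h) := by
  ext a
  rw [conv_repr k H _ h (ℛ k a), conv_repr k H f _ (ℛ k a)]
  have l1 : ∀ i ∈ (ℛ k a).index,
      conv k H f g ((ℛ k a).left i) * h ((ℛ k a).right i)
        = ∑ j ∈ (ℛ k ((ℛ k a).left i)).index,
            f ((ℛ k ((ℛ k a).left i)).left j) *
              (g ((ℛ k ((ℛ k a).left i)).right j) * h ((ℛ k a).right i)) := by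
    intro i _
    rw [conv_repr k H f g (ℛ k ((ℛ k a).left i)), Finset.sum_mul]
    simp [mul_assoc]
  have r1 : ∀ i ∈ (ℛ k a).index,
      f ((ℛ k a).left i) * conv k H g h ((ℛ k a).right i)
        = ∑ j ∈ (ℛ k ((ℛ k a).right i)).index,
            f ((ℛ k a).left i) *
              (g ((ℛ k ((ℛ k a).right i)).left j) * h ((ℛ k ((ℛ k a).right i)).right j)) := by
    intro i _
    rw [conv_repr k H g h (ℛ k ((ℛ k a).right i)), Finset.mul_sum]
  rw [Finset.sum_congr rfl l1, Finset.sum_congr rfl r1]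
  exact sum_tri3 k H (fun x y z => f x * (g y * h z))
    (by intros; simp [add_mul]) (by intros; simp [smul_mul_assoc])
    (by intros; simp [mul_add, add_mul]) (by intros; simp [smul_mul_assoc, mul_smul_comm])
    (by intros; simp [mul_add]) (by intros; simp [mul_smul_comm])
    (ℛ k a) (fun i => ℛ k ((ℛ k a).left i)) (fun i => ℛ k ((ℛ k a).right i))

end Conv

lemma comul_comp_antipode :
    Δ' ∘ₗ S' = TensorProduct.map S' S' ∘ₗ (TensorProduct.comm k H H).toLinearMap ∘ₗ Δ' := by
  set f₁ : H →ₗ[k] H ⊗[k] H := Δ' ∘ₗ S' with hf₁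
  set f₂ : H →ₗ[k] H ⊗[k] H :=
    TensorProduct.map S' S' ∘ₗ (TensorProduct.comm k H H).toLinearMap ∘ₗ Δ' with hf₂
  have f₂_repr : ∀ (z : H) (rz : Coalgebra.Repr k z (H × H)),
      f₂ z = ∑ j ∈ rz.index, S' (rz.right j) ⊗ₜ[k] S' (rz.left j) := by
    intro z rz
    simp only [hf₂, LinearMap.coe_comp, Function.comp_apply, LinearEquiv.coe_coe]
    rw [← rz.eq]
    simp [map_sum]
  have h1 : conv k H f₁ Δ' = convUnit k H := by
    ext a
    rw [conv_repr k H _ _ (ℛ k a)]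
    have e : ∀ i ∈ (ℛ k a).index, f₁ ((ℛ k a).left i) * Δ' ((ℛ k a).right i)
        = Δ' (S' ((ℛ k a).left i) * (ℛ k a).right i) := by
      intro i _
      simp [hf₁, Bialgebra.comul_mul]
    rw [Finset.sum_congr rfl e, ← map_sum, sum_antipode_mul_eq_algebraMap_counit (ℛ k a)]
    simp [convUnit_apply, Algebra.algebraMap_eq_smul_one]
  have hV : ∀ (z : H) (rz : Coalgebra.Repr k z (H × H)),
      ∑ j ∈ rz.index, ((1 : H) ⊗ₜ[k] rz.left j) * f₂ (rz.right j) = S' z ⊗ₜ[k] (1 : H) := by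
    intro z rz
    have e1 : ∀ j ∈ rz.index, ((1:H) ⊗ₜ[k] rz.left j) * f₂ (rz.right j)
        = ∑ m ∈ (ℛ k (rz.right j)).index,
            S' ((ℛ k (rz.right j)).right m) ⊗ₜ[k]
              (rz.left j * S' ((ℛ k (rz.right j)).left m)) := by
      intro j _
      rw [f₂_repr _ (ℛ k (rz.right j)), Finset.mul_sum]
      simp [Algebra.TensorProduct.tmul_mul_tmul]
    rw [Finset.sum_congr rfl e1,
      ← sum_tri3 k H (fun x u v => S' v ⊗ₜ[k] (x * S' u))
        (by intros; simp [add_mul, tmul_add, add_tmul])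
        (by intros; simp [smul_mul_assoc, tmul_smul, smul_tmul'])
        (by intros; simp [map_add, mul_add, tmul_add, add_tmul])
        (by intros; simp [map_smul, mul_smul_comm, tmul_smul, smul_tmul'])
        (by intros; simp [map_add, tmul_add, add_tmul])
        (by intros; simp [map_smul, tmul_smul, smul_tmul'])
        rz (fun i => ℛ k (rz.left i)) (fun i => ℛ k (rz.right i))]
    have e2 : ∀ j ∈ rz.index,
        ∑ m ∈ (ℛ k (rz.left j)).index,
          S' (rz.right j) ⊗ₜ[k] ((ℛ k (rz.left j)).left m * S' ((ℛ k (rz.left j)).right m))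
        = Coalgebra.counit (R := k) (rz.left j) • (S' (rz.right j) ⊗ₜ[k] (1:H)) := by
      intro j _
      rw [← TensorProduct.tmul_sum, sum_mul_antipode_eq_smul (ℛ k (rz.left j)),
        TensorProduct.tmul_smul]
    rw [Finset.sum_congr rfl e2]
    have e3 : ∑ j ∈ rz.index,
        Coalgebra.counit (R := k) (rz.left j) • (S' (rz.right j) ⊗ₜ[k] (1:H))
        = S' (∑ j ∈ rz.index, Coalgebra.counit (R := k) (rz.left j) • rz.right j) ⊗ₜ[k] (1:H) := by
      rw [map_sum, TensorProduct.sum_tmul]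
      simp [TensorProduct.smul_tmul']
    rw [e3, repr_counit_left]
  have h2 : conv k H Δ' f₂ = convUnit k H := by
    ext a
    rw [conv_repr k H _ _ (ℛ k a)]
    have e1 : ∀ i ∈ (ℛ k a).index, Δ' ((ℛ k a).left i) * f₂ ((ℛ k a).right i)
        = ∑ j ∈ (ℛ k ((ℛ k a).left i)).index,
            ((ℛ k ((ℛ k a).left i)).left j ⊗ₜ[k] (1:H)) *
              (((1:H) ⊗ₜ[k] (ℛ k ((ℛ k a).left i)).right j) * f₂ ((ℛ k a).right i)) := by
      intro i _
      conv_lhs => rw [← (ℛ k ((ℛ k a).left i)).eq]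
      rw [Finset.sum_mul]
      refine Finset.sum_congr rfl fun j _ => ?_
      rw [← mul_assoc, Algebra.TensorProduct.tmul_mul_tmul, mul_one, one_mul]
    rw [Finset.sum_congr rfl e1,
      sum_tri3 k H (fun x y z => (x ⊗ₜ[k] (1:H)) * (((1:H) ⊗ₜ[k] y) * f₂ z))
        (by intros; simp [add_tmul, add_mul])
        (by intros; simp [← TensorProduct.smul_tmul', smul_mul_assoc])
        (by intros; simp [tmul_add, add_mul, mul_add])
        (by intros; simp [tmul_smul, smul_mul_assoc, mul_smul_comm])
        (by intros; simp [map_add, mul_add])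
        (by intros; simp [map_smul, mul_smul_comm])
        (ℛ k a) (fun i => ℛ k ((ℛ k a).left i)) (fun i => ℛ k ((ℛ k a).right i))]
    have e2 : ∀ i ∈ (ℛ k a).index,
        ∑ j ∈ (ℛ k ((ℛ k a).right i)).index,
          ((ℛ k a).left i ⊗ₜ[k] (1:H)) *
            (((1:H) ⊗ₜ[k] (ℛ k ((ℛ k a).right i)).left j) *
              f₂ ((ℛ k ((ℛ k a).right i)).right j))
        = ((ℛ k a).left i * S' ((ℛ k a).right i)) ⊗ₜ[k] (1:H) := by
      intro i _
      rw [← Finset.mul_sum, hV ((ℛ k a).right i) (ℛ k ((ℛ k a).right i)),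
        Algebra.TensorProduct.tmul_mul_tmul, mul_one]
    rw [Finset.sum_congr rfl e2, ← TensorProduct.sum_tmul, sum_mul_antipode_eq_algebraMap_counit (ℛ k a)]
    simp [convUnit_apply, Algebra.TensorProduct.algebraMap_apply]
  have key : f₂ = f₁ := by
    calc f₂ = conv k H (convUnit k H) f₂ := (conv_unit_left k H f₂).symm
      _ = conv k H (conv k H f₁ Δ') f₂ := by rw [h1]
      _ = conv k H f₁ (conv k H Δ' f₂) := conv_assoc k H f₁ _ f₂
      _ = conv k H f₁ (convUnit k H) := by rw [h2]
      _ = f₁ := conv_unit_right k H f₁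
  exact key.symm

/-- A representation of the comultiplication of an antipode value. -/
def antipodeRepr {x : H} {ι : Type*} (rx : Coalgebra.Repr k x ι) : Coalgebra.Repr k (S' x) ι where
  index := rx.index
  left := fun i => S' (rx.right i)
  right := fun i => S' (rx.left i)
  eq := by
    have h := congrFun (congrArg DFunLike.coe (comul_comp_antipode k H)) x
    simp only [LinearMap.coe_comp, Function.comp_apply, LinearEquiv.coe_coe] at h
    rw [h, ← rx.eq]
    simp [map_sum]

lemma intPair_tmul (I : H →ₗ[k] k) (x g : H) :
    intPair k H I (x ⊗ₜ[k] g) = I (x * S' g) := by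
  simp [intPair]

set_option synthInstance.maxHeartbeats 1000000 in
lemma convMap_tmul (I : H →ₗ[k] k) (g h : H) {ι : Type*} (r : Coalgebra.Repr k h ι) :
    convMap k H I (g ⊗ₜ[k] h) = ∑ i ∈ r.index, I (r.right i * S' g) • r.left i := by
  simp only [convMap, LinearMap.coe_comp, Function.comp_apply, LinearEquiv.coe_coe,
    TensorProduct.comm_tmul, LinearMap.rTensor_tmul]
  rw [← r.eq, TensorProduct.sum_tmul]
  simp [intPair]

set_option synthInstance.maxHeartbeats 1000000 in
lemma convMap'_tmul (I : H →ₗ[k] k) (g h : H) {ι : Type*} (r : Coalgebra.Repr k g ι) :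
    convMap' k H I (g ⊗ₜ[k] h) = ∑ i ∈ r.index, I (h * S' (r.left i)) • r.right i := by
  simp only [convMap', LinearMap.coe_comp, Function.comp_apply, LinearEquiv.coe_coe,
    TensorProduct.comm_tmul, LinearMap.lTensor_tmul]
  rw [← r.eq, TensorProduct.tmul_sum]
  simp [intPair]

@[simp] lemma mulRepr_index {x y : H} {ι κ : Type*} (rx : Coalgebra.Repr k x ι) (ry : Coalgebra.Repr k y κ) :
    (mulRepr k H rx ry).index = rx.index ×ˢ ry.index := rfl
@[simp] lemma mulRepr_left {x y : H} {ι κ : Type*} (rx : Coalgebra.Repr k x ι) (ry : Coalgebra.Repr k y κ) (p) :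
    (mulRepr k H rx ry).left p = rx.left p.1 * ry.left p.2 := rfl
@[simp] lemma mulRepr_right {x y : H} {ι κ : Type*} (rx : Coalgebra.Repr k x ι) (ry : Coalgebra.Repr k y κ) (p) :
    (mulRepr k H rx ry).right p = rx.right p.1 * ry.right p.2 := rfl
@[simp] lemma antipodeRepr_index {x : H} {ι : Type*} (rx : Coalgebra.Repr k x ι) :
    (antipodeRepr k H rx).index = rx.index := rfl
@[simp] lemma antipodeRepr_left {x : H} {ι : Type*} (rx : Coalgebra.Repr k x ι) (i) :
    (antipodeRepr k H rx).left i = S' (rx.right i) := rfl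
@[simp] lemma antipodeRepr_right {x : H} {ι : Type*} (rx : Coalgebra.Repr k x ι) (i) :
    (antipodeRepr k H rx).right i = S' (rx.left i) := rfl

lemma convMap_eq_convMap' (I : H →ₗ[k] k) (hI : IsLeftIntegral k H I) :
    convMap k H I = convMap' k H I := by
  apply TensorProduct.ext'
  intro g h
  rw [convMap_tmul k H I g h (ℛ k h), convMap'_tmul k H I g h (ℛ k g)]
  symm
  set rg := ℛ k g with hrg
  set rh := ℛ k h with hrh
  have step1 : ∀ i ∈ rg.index,
      I (h * S' (rg.left i)) • rg.right i
        = ∑ jm ∈ (mulRepr k H rh (antipodeRepr k H (ℛ k (rg.left i)))).index,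
            I ((mulRepr k H rh (antipodeRepr k H (ℛ k (rg.left i)))).right jm) •
              ((mulRepr k H rh (antipodeRepr k H (ℛ k (rg.left i)))).left jm * rg.right i) := by
    intro i _
    have h0 := repr_integral k H hI (mulRepr k H rh (antipodeRepr k H (ℛ k (rg.left i))))
    have h2 := congrArg (fun x => x * rg.right i) h0
    simp only [Finset.sum_mul, smul_mul_assoc, one_mul] at h2
    exact h2.symm
  rw [Finset.sum_congr rfl step1]
  simp only [mulRepr_index, mulRepr_left, mulRepr_right, antipodeRepr_index,
    antipodeRepr_left, antipodeRepr_right]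
  refine Eq.trans (Finset.sum_congr rfl fun i _ => Finset.sum_product _ _ _) ?_
  rw [Finset.sum_comm]
  have step2 : ∀ j ∈ rh.index,
      ∑ i ∈ rg.index, ∑ m ∈ (ℛ k (rg.left i)).index,
        I (rh.right j * S' ((ℛ k (rg.left i)).left m)) •
          (rh.left j * S' ((ℛ k (rg.left i)).right m) * rg.right i)
      = ∑ i ∈ rg.index, ∑ m ∈ (ℛ k (rg.right i)).index,
          I (rh.right j * S' (rg.left i)) •
            (rh.left j * (S' ((ℛ k (rg.right i)).left m) * (ℛ k (rg.right i)).right m)) := by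
    intro j _
    have := sum_tri3 k H
      (fun x y z => I (rh.right j * S' x) • (rh.left j * (S' y * z)))
      (by intros; simp [map_add, mul_add, add_smul])
      (by intros; simp [map_smul, mul_smul_comm, smul_smul, smul_eq_mul])
      (by intros; simp [map_add, add_mul, mul_add])
      (by intros; simp [map_smul, smul_mul_assoc, mul_smul_comm, smul_smul, mul_comm])
      (by intros; simp [mul_add])
      (by intros; simp [mul_smul_comm, smul_smul, mul_comm])
      rg (fun i => ℛ k (rg.left i)) (fun i => ℛ k (rg.right i))
    simpa [mul_assoc] using this
  rw [Finset.sum_congr rfl step2]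
  have step3 : ∀ j ∈ rh.index,
      ∑ i ∈ rg.index, ∑ m ∈ (ℛ k (rg.right i)).index,
        I (rh.right j * S' (rg.left i)) •
          (rh.left j * (S' ((ℛ k (rg.right i)).left m) * (ℛ k (rg.right i)).right m))
      = ∑ i ∈ rg.index, Coalgebra.counit (R := k) (rg.right i) •
          (I (rh.right j * S' (rg.left i)) • rh.left j) := by
    intro j _
    refine Finset.sum_congr rfl fun i _ => ?_
    rw [← Finset.smul_sum, ← Finset.mul_sum, sum_antipode_mul_eq_smul (ℛ k (rg.right i))]
    rw [mul_smul_comm, mul_one, smul_comm]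
  rw [Finset.sum_congr rfl step3]
  refine Finset.sum_congr rfl fun j _ => ?_
  have hg := repr_counit_right k H rg
  have e : I (rh.right j * S' g)
      = ∑ i ∈ rg.index, Coalgebra.counit (R := k) (rg.right i) * I (rh.right j * S' (rg.left i)) := by
    conv_lhs => rw [← hg]
    simp [map_sum, map_smul, Finset.mul_sum, mul_smul_comm, smul_eq_mul]
  rw [e, Finset.sum_smul]
  refine Finset.sum_congr rfl fun i _ => ?_
  rw [smul_smul]

/-- Convolution with `g` on the left, as a linear map. -/
def convRight (I : H →ₗ[k] k) (g : H) : H →ₗ[k] H :=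
  convMap k H I ∘ₗ TensorProduct.mk k H H g

lemma convRight_apply (I : H →ₗ[k] k) (g x : H) :
    convRight k H I g x = convMap k H I (g ⊗ₜ[k] x) := rfl

lemma comul_convProd (I : H →ₗ[k] k) (g h : H) :
    Δ' (convProd k H I g h) = LinearMap.lTensor H (convRight k H I g) (Δ' h) := by
  rw [convProd, convMap_tmul k H I g h (ℛ k h), map_sum]
  have e1 : ∀ i ∈ (ℛ k h).index,
      Δ' (I ((ℛ k h).right i * S' g) • (ℛ k h).left i)
        = ∑ j ∈ (ℛ k ((ℛ k h).left i)).index, I ((ℛ k h).right i * S' g) •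
            ((ℛ k ((ℛ k h).left i)).left j ⊗ₜ[k] (ℛ k ((ℛ k h).left i)).right j) := by
    intro i _
    rw [map_smul, ← (ℛ k ((ℛ k h).left i)).eq, Finset.smul_sum]
  rw [Finset.sum_congr rfl e1,
    sum_tri3 k H (fun x y z => I (z * S' g) • (x ⊗ₜ[k] y))
      (by intros; simp [add_tmul, smul_add])
      (by intros; simp [← TensorProduct.smul_tmul', smul_smul, mul_comm])
      (by intros; simp [tmul_add, smul_add])
      (by intros; simp [tmul_smul, smul_smul, mul_comm])
      (by intros; simp [add_mul, map_add, add_smul])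
      (by intros; simp [smul_mul_assoc, map_smul, smul_eq_mul, mul_smul])
      (ℛ k h) (fun i => ℛ k ((ℛ k h).left i)) (fun i => ℛ k ((ℛ k h).right i))]
  conv_rhs => rw [← (ℛ k h).eq]
  rw [map_sum]
  refine Finset.sum_congr rfl fun i _ => ?_
  rw [LinearMap.lTensor_tmul, convRight_apply,
    convMap_tmul k H I g ((ℛ k h).right i) (ℛ k ((ℛ k h).right i)), TensorProduct.tmul_sum]
  refine Finset.sum_congr rfl fun j _ => ?_
  rw [TensorProduct.tmul_smul]

/-- The map `x ⊗ y ↦ ∫(b S(x)) y`. -/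
def psi (I : H →ₗ[k] k) (b : H) : H ⊗[k] H →ₗ[k] H :=
  TensorProduct.lift (LinearMap.mk₂ k (fun x y => I (b * S' x) • y)
    (by intros; simp [map_add, mul_add, add_smul])
    (by intros; simp [map_smul, mul_smul_comm, smul_eq_mul, mul_smul])
    (by intros; simp [smul_add])
    (by intros; simp [smul_smul, mul_comm]))

@[simp] lemma psi_tmul (I : H →ₗ[k] k) (b x y : H) :
    psi k H I b (x ⊗ₜ[k] y) = I (b * S' x) • y := by
  simp [psi]

lemma convMap'_eq_psi (I : H →ₗ[k] k) (a b : H) :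
    convMap' k H I (a ⊗ₜ[k] b) = psi k H I b (Δ' a) := by
  rw [convMap'_tmul k H I a b (ℛ k a), ← (ℛ k a).eq, map_sum]
  simp

/-- The convolution product `g * h := h₁ ∫(h₂ S(g))` on a Hopf algebra with nonzero left
integral is associative, making `(H, *)` a (possibly non-unital) associative `k`-algebra. -/
theorem convProd_assoc (I : H →ₗ[k] k) (hI : IsLeftIntegral k H I) (hne : I ≠ 0) :
    ∀ g h l : H, convProd k H I (convProd k H I g h) l = convProd k H I g (convProd k H I h l) := by
  intro g h l
  have hA := convMap_eq_convMap' k H I hI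
  calc convProd k H I (convProd k H I g h) l
      = convMap' k H I ((convProd k H I g h) ⊗ₜ[k] l) := by rw [convProd, hA]
    _ = psi k H I l (Δ' (convProd k H I g h)) := convMap'_eq_psi k H I _ l
    _ = psi k H I l (LinearMap.lTensor H (convRight k H I g) (Δ' h)) := by
        rw [comul_convProd]
    _ = ∑ i ∈ (ℛ k h).index,
          I (l * S' ((ℛ k h).left i)) • convRight k H I g ((ℛ k h).right i) := by
        rw [← (ℛ k h).eq, map_sum, map_sum]
        simp
    _ = convRight k H I g
          (∑ i ∈ (ℛ k h).index, I (l * S' ((ℛ k h).left i)) • (ℛ k h).right i) := by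
        rw [map_sum]
        simp [map_smul]
    _ = convRight k H I g (convMap' k H I (h ⊗ₜ[k] l)) := by
        rw [convMap'_tmul k H I h l (ℛ k h)]
    _ = convProd k H I g (convProd k H I h l) := by rw [← hA]; rfl
end
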